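/- Let ⋆ be the unique binary operation on {1,...,N} satisfying p ⋆ 1 = p + 1 mod N and p ⋆ (q ⋆ 1) = (p ⋆ q) ⋆ (p ⋆ 1). Then p ⋆ N = N for all p in {1,...,N}. -/

import Mathlib

def LaverAxioms (N : ℕ) (star : ℕ → ℕ → ℕ) : Prop :=
  (∀ p q, p ∈ Set.Icc 1 N → q ∈ Set.Icc 1 N → star p q ∈ Set.Icc 1 N) ∧
  (∀ p ∈ Set.Icc 1 N, star p 1 = p % N + 1) ∧
  (∀ p q, p ∈ Set.Icc 1 N → q ∈ Set.Icc 1 N →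
    star p (star q 1) = star (star p q) (star p 1))

/-! Row `N` of the table is the identity, and for `p < N` every entry of row `p` exceeds `p`
(downward induction on `p`, then induction on the column, using
`p ⋆ (q + 1) = (p ⋆ q) ⋆ (p + 1)`). Now `p ⋆ 1 = p ⋆ (N ⋆ 1) = (p ⋆ N) ⋆ (p + 1)`; if
`x = p ⋆ N` were below `N`, then `p + 1 = x ⋆ (p + 1) > x > p`, which is impossible. -/

namespace LaverAxioms

variable {N : ℕ} {star : ℕ → ℕ → ℕ} {p q : ℕ}

theorem star_one_of_lt (h : LaverAxioms N star) (hp : 1 ≤ p) (hpN : p < N) :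
    star p 1 = p + 1 := by
  rw [h.2.1 p ⟨hp, hpN.le⟩, Nat.mod_eq_of_lt hpN]

theorem star_self_one (h : LaverAxioms N star) (hN : 0 < N) : star N 1 = 1 := by
  rw [h.2.1 N ⟨hN, le_rfl⟩, Nat.mod_self]

theorem star_succ (h : LaverAxioms N star) (hp : p ∈ Set.Icc 1 N) (hq : 1 ≤ q) (hqN : q < N) :
    star p (q + 1) = star (star p q) (star p 1) := by
  rw [← h.star_one_of_lt hq hqN]
  exact h.2.2 p q hp ⟨hq, hqN.le⟩

theorem star_self (h : LaverAxioms N star) (hq : q ∈ Set.Icc 1 N) : star N q = q := by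
  obtain ⟨hq1, hqN⟩ := hq
  have hN : 0 < N := hq1.trans hqN
  induction q, hq1 using Nat.le_induction with
  | base => exact h.star_self_one hN
  | succ q hq1 ih =>
    rw [h.star_succ ⟨hN, le_rfl⟩ hq1 (by omega), ih (by omega), h.star_self_one hN,
      h.star_one_of_lt hq1 (by omega)]

theorem lt_star_of_lt_star_of_lt (h : LaverAxioms N star) (hp : 1 ≤ p) (hpN : p < N)
    (ih : ∀ r, p < r → r < N → ∀ q ∈ Set.Icc 1 N, r < star r q) (hq : q ∈ Set.Icc 1 N) :
    p < star p q := by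
  obtain ⟨hq1, hqN⟩ := hq
  induction q, hq1 using Nat.le_induction with
  | base => rw [h.star_one_of_lt hp hpN]; omega
  | succ q hq1 ihq =>
    have hpq : p < star p q := ihq (by omega)
    have hpq_mem := h.1 p q ⟨hp, hpN.le⟩ ⟨hq1, by omega⟩
    rw [h.star_succ ⟨hp, hpN.le⟩ hq1 (by omega), h.star_one_of_lt hp hpN]
    rcases hpq_mem.2.lt_or_eq with hr | hr
    · have := ih _ hpq hr (p + 1) ⟨by omega, by omega⟩
      omega
    · rw [hr, h.star_self ⟨by omega, by omega⟩]
      omega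

theorem lt_star (h : LaverAxioms N star) {p q : ℕ} (hp : 1 ≤ p) (hpN : p < N)
    (hq : q ∈ Set.Icc 1 N) :
    p < star p q :=
  h.lt_star_of_lt_star_of_lt hp hpN
    (fun r hpr hrN _ hq' => lt_star h (hp.trans hpr.le) hrN hq') hq
termination_by N - p

end LaverAxioms

theorem laver_last_column_general (N : ℕ) (star : ℕ → ℕ → ℕ)
    (h : LaverAxioms N star) :
    ∀ p ∈ Set.Icc 1 N, star p N = N := by
  rintro p ⟨hp, hpN⟩
  have hN : 0 < N := hp.trans hpN
  rcases hpN.lt_or_eq with hpN | rfl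
  · have hx_mem := h.1 p N ⟨hp, hpN.le⟩ ⟨hN, le_rfl⟩
    have key := h.2.2 p N ⟨hp, hpN.le⟩ ⟨hN, le_rfl⟩
    rw [h.star_self_one hN, h.star_one_of_lt hp hpN] at key
    by_contra hne
    have hxN : star p N < N := lt_of_le_of_ne hx_mem.2 hne
    have h₁ : p < star p N := h.lt_star hp hpN ⟨hN, le_rfl⟩
    have h₂ := h.lt_star (by omega) hxN (q := p + 1) ⟨by omega, by omega⟩
    omega
  · exact h.star_self ⟨hp, le_rfl⟩

/-- p ⋆ N = N for all p in {1,...,N}. -/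
theorem laver_last_column (N : ℕ) (hN : 0 < N) (star : ℕ → ℕ → ℕ)
    (h : LaverAxioms N star) :
    ∀ p ∈ Set.Icc 1 N, star p N = N :=
  laver_last_column_general N star h
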